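/- arXiv:1008.5017 — 3 statements merged into one kernel-verified Lean document; each statement's English description precedes it below -/
import Mathlib

section
/- For X, Y₁, …, Y_m ∈ H and u = [Y₁,[Y₂,[⋯,[Y_{m−1},Y_m]⋯]]] a left-normed iterated bracket in the tensor algebra, the cyclic symmetrization satisfies N(X⊗u) = X⊗u + Σ_{i=1}^m Y_i ⊗ [[Y_{i+1},⋯[Y_{m−1},Y_m]⋯], [⋯[[X,Y₁],Y₂],⋯,Y_{i−1}]]. In particular N maps H⊗L̂ into H⊗L̂, where L̂ is the completed free Lie algebra inside the completed tensor algebra. -/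
/-! Model of the completed tensor algebra `T̂` of `H = ℚ^d`: an element of `T̂`
is a function assigning to each word in the basis letters (elements of `Fin d`)
its coefficient. -/

namespace Paper

/-- words in the basis letters of `H` -/
abbrev Word (d : ℕ) := List (Fin d)

/-- the completed tensor algebra, as coefficient functions on words -/
abbrev Ten (d : ℕ) := Word d → ℚ

variable {d : ℕ}

/-- the unit `1 ∈ T̂` -/
def oneT : Ten d := fun w => if w = [] then 1 else 0

/-- the (concatenation) product of `T̂` -/
def mulT (f g : Ten d) : Ten d :=
  fun w => ∑ k ∈ Finset.range (w.length + 1), f (List.take k w) * g (List.drop k w)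

/-- the commutator bracket `[a,b] = ab - ba` -/
def brT (f g : Ten d) : Ten d := mulT f g - mulT g f

/-- powers -/
def powT (f : Ten d) : ℕ → Ten d
  | 0 => oneT
  | n + 1 => mulT f (powT f n)

/-- the cyclic symmetrization operator `N`, with `N|_{H^{⊗p}} = ∑_{m<p} ν^m`
and `N = 0` in degree `0`. -/
def Nop (f : Ten d) : Ten d := fun w => ∑ m ∈ Finset.range w.length, f (w.rotate m)

/-- the cyclic permutation `ν` -/
def nuT (f : Ten d) : Ten d := fun w => f (w.rotate (w.length - 1))

/-- being an element of `H ⊂ T̂` (homogeneous of degree 1) -/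
def deg1 (f : Ten d) : Prop := ∀ w : Word d, w.length ≠ 1 → f w = 0

/-- the basis letter `i`, as a degree-one element of `T̂` -/
def singT (i : Fin d) : Ten d := fun w => if w = [i] then 1 else 0

/-- the right-normed iterated bracket `[x₁,[x₂,[⋯,[x_{k-1},x_k]⋯]]]` of a list
of elements of `T̂` (a single element for a singleton, `0` for the empty list). -/
def rightBr : List (Ten d) → Ten d
  | [] => 0
  | [x] => x
  | x :: l => brT x (rightBr l)

/-- the left-normed iterated bracket `[⋯[[x,y₁],y₂],⋯,y_k]`. -/
def leftBr (x : Ten d) (l : List (Ten d)) : Ten d := l.foldl brT x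

/-- the right-normed bracket of the letters of a word -/
def PhiWord : Word d → Ten d
  | [] => 0
  | [x] => singT x
  | x :: l => brT (singT x) (PhiWord l)

/-- the degree-`p` truncation (homogeneous part) of an element of `T̂` -/
def truncT (p : ℕ) (f : Ten d) : Ten d := fun w => if w.length = p then f w else 0

/-- the degree-`p` part `𝓛_p` of the free Lie algebra generated by `H` inside
`T̂` (spanned by the right-normed brackets of words of length `p`) -/
def LieN (d p : ℕ) : Submodule ℚ (Ten d) :=
  Submodule.span ℚ {g : Ten d | ∃ w : Word d, w.length = p ∧ g = PhiWord w}

/-- membership in the completed free Lie algebra `𝓛̂ ⊂ T̂`: every homogeneous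
component is a Lie element. -/
def memLhat (f : Ten d) : Prop := ∀ p : ℕ, truncT p f ∈ LieN d p

/-- membership in (the closure of) `H ⊗ 𝓛̂ ⊂ T̂₁`. -/
def memHLhat (f : Ten d) : Prop :=
  ∀ p : ℕ, truncT p f ∈ Submodule.span ℚ
    {g : Ten d | ∃ X v : Ten d, deg1 X ∧ memLhat v ∧ g = mulT X v}

/-- membership in (the closure of) `𝓛̂ ⊗ 𝓛̂ ⊂ T̂`. -/
def memLLhat (f : Ten d) : Prop :=
  ∀ p : ℕ, truncT p f ∈ Submodule.span ℚ
    {g : Ten d | ∃ u v : Ten d, memLhat u ∧ memLhat v ∧ g = mulT u v}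

/-- the bracket map `H ⊗ T̂ → T̂`, `X ⊗ u ↦ [X,u] = Xu - uX`, in coefficients:
the `uX`-part of an element `f = ∑ X ⊗ u_X` of `H ⊗ T̂ = T̂₁` has coefficient
at `w` equal to `f` of the backwards rotation of `w`. -/
def brMap (f : Ten d) : Ten d := fun w => f w - f (w.rotate (w.length - 1))

/-! Since `N` is invariant under cyclic permutations of tensor factors,
`N(a(yv - vy)) = N((ay - ya)v)` for all `a`, `y`, `v`. Replacing `X` by a product `∏ A` of
elements of `H`, induction on the right-normed bracket `u = [Y₁, u']` thus trades
`N(∏ A · u)` for `N(∏ (A Y₁) · u') - N(∏ (Y₁ A) · u')`. The rotations of `∏ A · u` that start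
inside `A` telescope, and the remaining ones produce the sum of the formula, each of whose terms
is an element of `H` times a Lie element; this gives the closure of `H ⊗ 𝓛̂` under `N` degree
by degree. -/

lemma sum_range_rotate_add {α M : Type*} [AddCancelCommMonoid M] (l : List α) (F : List α → M)
    (k : ℕ) : ∑ m ∈ Finset.range l.length, F (l.rotate (m + k)) =
      ∑ m ∈ Finset.range l.length, F (l.rotate m) := by
  induction k with
  | zero => rfl
  | succ k ih =>
    have hshift := (Finset.sum_range_succ' (fun m => F (l.rotate (m + k))) l.length).symm.trans
      (Finset.sum_range_succ (fun m => F (l.rotate (m + k))) l.length)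
    have hper : l.rotate (l.length + k) = l.rotate k := by
      rw [← List.rotate_rotate, List.rotate_length]
    rw [hper, zero_add] at hshift
    rw [← ih, ← add_right_cancel hshift]
    simp only [Nat.add_right_comm _ 1, Nat.add_assoc]

lemma take_rotate_of_le {α : Type*} {l : List α} {k : ℕ} (hk : k ≤ l.length) :
    (l.rotate k).take (l.length - k) = l.drop k := by
  rw [List.rotate_eq_drop_append_take hk]
  exact List.take_left' (by simp)

lemma drop_rotate_of_le {α : Type*} {l : List α} {k : ℕ} (hk : k ≤ l.length) :
    (l.rotate k).drop (l.length - k) = l.take k := by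
  rw [List.rotate_eq_drop_append_take hk]
  exact List.drop_left' (by simp)

lemma mulT_add (f g h : Ten d) : mulT f (g + h) = mulT f g + mulT f h := by
  funext w; simp [mulT, mul_add, Finset.sum_add_distrib]

lemma add_mulT (f g h : Ten d) : mulT (f + g) h = mulT f h + mulT g h := by
  funext w; simp [mulT, add_mul, Finset.sum_add_distrib]

lemma mulT_smul (c : ℚ) (f g : Ten d) : mulT f (c • g) = c • mulT f g := by
  funext w; simp [mulT, Finset.mul_sum, mul_left_comm]

lemma smul_mulT (c : ℚ) (f g : Ten d) : mulT (c • f) g = c • mulT f g := by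
  funext w; simp [mulT, Finset.mul_sum, mul_assoc]

def mulTₗ : Ten d →ₗ[ℚ] Ten d →ₗ[ℚ] Ten d :=
  LinearMap.mk₂ ℚ mulT add_mulT smul_mulT mulT_add mulT_smul

lemma mulT_sub (f g h : Ten d) : mulT f (g - h) = mulT f g - mulT f h :=
  (mulTₗ f).map_sub g h

lemma sub_mulT (f g h : Ten d) : mulT (f - g) h = mulT f h - mulT g h :=
  mulTₗ.map_sub₂ f g h

lemma mulT_zero (f : Ten d) : mulT f 0 = 0 := (mulTₗ f).map_zero

lemma zero_mulT (f : Ten d) : mulT 0 f = 0 := mulTₗ.map_zero₂ f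

lemma mulT_oneT (f : Ten d) : mulT f oneT = f := by
  funext w
  rw [mulT, Finset.sum_eq_single w.length]
  · simp [oneT]
  · intro k hk hne
    have : w.drop k ≠ [] := by
      rw [Finset.mem_range] at hk; rw [Ne, List.drop_eq_nil_iff]; omega
    simp [oneT, this]
  · simp

lemma oneT_mulT (f : Ten d) : mulT oneT f = f := by
  funext w
  rw [mulT, Finset.sum_eq_single 0]
  · simp [oneT]
  · intro k hk hne
    have : w.take k ≠ [] := by
      rw [Ne, List.take_eq_nil_iff]
      rintro (rfl | rfl)
      exacts [hne rfl, hne (by simpa using hk)]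
    simp [oneT, this]
  · simp

lemma mulT_assoc (f g h : Ten d) : mulT (mulT f g) h = mulT f (mulT g h) := by
  funext w
  set n := w.length
  calc mulT (mulT f g) h w
      = ∑ k ∈ Finset.range (n + 1), ∑ j ∈ Finset.range (k + 1),
          f (w.take j) * g ((w.drop j).take (k - j)) * h (w.drop k) := by
        refine Finset.sum_congr rfl fun k hk => ?_
        have hkn : k ≤ n := Nat.lt_succ_iff.1 (Finset.mem_range.1 hk)
        rw [mulT, List.length_take, min_eq_left hkn, Finset.sum_mul]
        refine Finset.sum_congr rfl fun j hj => ?_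
        rw [List.take_take, min_eq_left (Nat.lt_succ_iff.1 (Finset.mem_range.1 hj)),
          List.drop_take]
    _ = ∑ j ∈ Finset.range (n + 1), ∑ k ∈ Finset.Ico j (n + 1),
          f (w.take j) * g ((w.drop j).take (k - j)) * h (w.drop k) := by
        refine Finset.sum_comm' fun k j => ?_
        simp only [Finset.mem_range, Finset.mem_Ico]
        omega
    _ = mulT f (mulT g h) w := by
        refine Finset.sum_congr rfl fun j hj => ?_
        rw [Finset.sum_Ico_eq_sum_range, mulT, Finset.mul_sum, List.length_drop]
        refine Finset.sum_congr (by rw [Finset.mem_range] at hj; congr 1; omega) fun t _ => ?_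
        rw [Nat.add_sub_cancel_left, List.drop_drop, mul_assoc]

def brTₗ : Ten d →ₗ[ℚ] Ten d →ₗ[ℚ] Ten d := mulTₗ - mulTₗ.flip

lemma brT_sub_left (f g h : Ten d) : brT (f - g) h = brT f h - brT g h :=
  brTₗ.map_sub₂ f g h

lemma brT_sub_right (f g h : Ten d) : brT f (g - h) = brT f g - brT f h :=
  (brTₗ f).map_sub g h

lemma brT_zero_left (f : Ten d) : brT 0 f = 0 := brTₗ.map_zero₂ f

lemma brT_brT (x y z : Ten d) : brT (brT x y) z = brT x (brT y z) - brT y (brT x z) := by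
  simp only [brT, mulT_sub, sub_mulT, mulT_assoc]
  abel

lemma rightBr_cons {l : List (Ten d)} (x : Ten d) (hl : l ≠ []) :
    rightBr (x :: l) = brT x (rightBr l) := by
  cases l with
  | nil => exact absurd rfl hl
  | cons _ _ => rfl

lemma leftBr_cons (x y : Ten d) (l : List (Ten d)) :
    leftBr x (y :: l) = leftBr (brT x y) l := rfl

lemma leftBr_sub (x y : Ten d) (l : List (Ten d)) :
    leftBr (x - y) l = leftBr x l - leftBr y l := by
  induction l generalizing x y with
  | nil => rfl
  | cons z l ih => simp only [leftBr_cons, brT_sub_left, ih]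

def Nopₗ : Ten d →ₗ[ℚ] Ten d where
  toFun := Nop
  map_add' f g := by funext w; simp [Nop, Finset.sum_add_distrib]
  map_smul' c f := by funext w; simp [Nop, Finset.mul_sum]

lemma Nop_sub (f g : Ten d) : Nop (f - g) = Nop f - Nop g := Nopₗ.map_sub f g

lemma Nop_zero : Nop (0 : Ten d) = 0 := Nopₗ.map_zero

def truncTₗ (p : ℕ) : Ten d →ₗ[ℚ] Ten d where
  toFun := truncT p
  map_add' f g := by funext w; by_cases h : w.length = p <;> simp [truncT, h]
  map_smul' c f := by funext w; by_cases h : w.length = p <;> simp [truncT, h]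

lemma truncT_truncT (p : ℕ) (f : Ten d) : truncT p (truncT p f) = truncT p f := by
  funext w; by_cases h : w.length = p <;> simp [truncT, h]

lemma truncT_Nop (p : ℕ) (f : Ten d) : truncT p (Nop f) = Nop (truncT p f) := by
  funext w; by_cases h : w.length = p <;> simp [truncT, Nop, h]

def homogT (d p : ℕ) : Submodule ℚ (Ten d) where
  carrier := {f | ∀ w : Word d, w.length ≠ p → f w = 0}
  add_mem' hf hg w hw := by simp [hf w hw, hg w hw]
  zero_mem' _ _ := rfl
  smul_mem' c f hf w hw := by simp [hf w hw]

lemma mulT_mem_homogT {p q : ℕ} {f g : Ten d} (hf : f ∈ homogT d p) (hg : g ∈ homogT d q) :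
    mulT f g ∈ homogT d (p + q) := by
  intro w hw
  refine Finset.sum_eq_zero fun k hk => ?_
  by_cases hp : (w.take k).length = p
  · rw [hg _ (by rw [List.length_take] at hp; rw [List.length_drop]; omega), mul_zero]
  · rw [hf _ hp, zero_mul]

lemma brT_mem_homogT {p q : ℕ} {f g : Ten d} (hf : f ∈ homogT d p) (hg : g ∈ homogT d q) :
    brT f g ∈ homogT d (p + q) :=
  Submodule.sub_mem _ (mulT_mem_homogT hf hg) (add_comm q p ▸ mulT_mem_homogT hg hf)

lemma truncT_of_mem_homogT {p : ℕ} {f : Ten d} (hf : f ∈ homogT d p) : truncT p f = f := by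
  funext w; by_cases h : w.length = p <;> simp [truncT, h, hf w]

lemma truncT_of_mem_homogT_of_ne {p q : ℕ} {f : Ten d} (hf : f ∈ homogT d p) (hq : q ≠ p) :
    truncT q f = 0 := by
  funext w; by_cases h : w.length = q <;> simp [truncT, h, hf w, hq]

lemma singT_mem_homogT (i : Fin d) : singT i ∈ homogT d 1 := by
  intro w hw
  simp only [singT, ite_eq_right_iff]
  rintro rfl
  exact absurd rfl hw

lemma PhiWord_mem_homogT (w : Word d) : PhiWord w ∈ homogT d w.length := by
  induction w using PhiWord.induct with
  | case1 => exact Submodule.zero_mem _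
  | case2 x => exact singT_mem_homogT x
  | case3 x l hl ih =>
    rw [PhiWord, List.length_cons, add_comm]
    exacts [brT_mem_homogT (singT_mem_homogT x) ih, hl]

lemma LieN_le_homogT (p : ℕ) : LieN d p ≤ homogT d p :=
  Submodule.span_le.2 fun _ ⟨w, hw, hg⟩ => hg ▸ hw ▸ PhiWord_mem_homogT w

lemma memLhat_of_mem_LieN {p : ℕ} {f : Ten d} (hf : f ∈ LieN d p) : memLhat f := by
  intro q
  have hf' := LieN_le_homogT p hf
  by_cases hq : q = p
  · subst hq; rwa [truncT_of_mem_homogT hf']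
  · rw [truncT_of_mem_homogT_of_ne hf' hq]; exact Submodule.zero_mem _

lemma PhiWord_mem_LieN (w : Word d) : PhiWord w ∈ LieN d w.length :=
  Submodule.subset_span ⟨w, rfl, rfl⟩

lemma mem_LieN_one_of_deg1 {X : Ten d} (hX : deg1 X) : X ∈ LieN d 1 := by
  have hsum : X = ∑ i, X [i] • PhiWord [i] := by
    funext w
    simp only [Finset.sum_apply, Pi.smul_apply, smul_eq_mul, PhiWord, singT]
    by_cases hw : w.length = 1
    · obtain ⟨c, rfl⟩ := List.length_eq_one_iff.1 hw
      simp
    · rw [hX w hw]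
      refine (Finset.sum_eq_zero fun i _ => ?_).symm
      rw [if_neg (by rintro rfl; exact hw rfl), mul_zero]
  rw [hsum]
  exact Submodule.sum_mem _ fun i _ => Submodule.smul_mem _ _ (PhiWord_mem_LieN [i])

lemma brT_singT_mem_LieN (x : Fin d) {q : ℕ} {v : Ten d} (hv : v ∈ LieN d q) :
    brT (singT x) v ∈ LieN d (q + 1) := by
  refine (Submodule.span_le (p := (LieN d (q + 1)).comap (brTₗ (singT x))) |>.2 ?_) hv
  rintro _ ⟨w, rfl, rfl⟩
  cases w with
  | nil => simp [PhiWord]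
  | cons y w => exact PhiWord_mem_LieN (x :: y :: w)

lemma brT_PhiWord_mem_LieN (w : Word d) {q : ℕ} {v : Ten d} (hv : v ∈ LieN d q) :
    brT (PhiWord w) v ∈ LieN d (w.length + q) := by
  induction w using PhiWord.induct generalizing q v with
  | case1 => rw [PhiWord, brT_zero_left]; exact Submodule.zero_mem _
  | case2 x => rw [add_comm]; exact brT_singT_mem_LieN x hv
  | case3 x l hl ih =>
    have h2 : brT (PhiWord l) (brT (singT x) v) ∈ LieN d (l.length + q + 1) := by
      rw [Nat.add_assoc]; exact ih (brT_singT_mem_LieN x hv)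
    rw [PhiWord, brT_brT, List.length_cons, Nat.add_right_comm]
    · exact Submodule.sub_mem _ (brT_singT_mem_LieN x (ih hv)) h2
    · exact hl

lemma brT_mem_LieN {p q : ℕ} {u v : Ten d} (hu : u ∈ LieN d p) (hv : v ∈ LieN d q) :
    brT u v ∈ LieN d (p + q) := by
  refine (Submodule.span_le (p := (LieN d (p + q)).comap (brTₗ.flip v)) |>.2 ?_) hu
  rintro _ ⟨w, rfl, rfl⟩
  exact brT_PhiWord_mem_LieN w hv

lemma leftBr_mem_LieN {l : List (Ten d)} (hl : ∀ y ∈ l, deg1 y) {r : ℕ} {x : Ten d}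
    (hx : x ∈ LieN d r) : leftBr x l ∈ LieN d (r + l.length) := by
  induction l generalizing r x with
  | nil => exact hx
  | cons y l ih =>
    rw [leftBr_cons, List.length_cons, ← Nat.add_assoc, Nat.add_right_comm]
    exact ih (fun z hz => hl z (List.mem_cons_of_mem y hz))
      (brT_mem_LieN hx (mem_LieN_one_of_deg1 (hl y List.mem_cons_self)))

lemma rightBr_map_singT (w : Word d) : rightBr (w.map singT) = PhiWord w := by
  induction w using PhiWord.induct with
  | case1 => rfl
  | case2 x => rfl
  | case3 x l hl ih =>
    rw [List.map_cons, rightBr_cons _ (by simpa using hl), ih, PhiWord]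
    exact hl

lemma rightBr_mem_LieN {L : List (Ten d)} (hL : ∀ y ∈ L, deg1 y) :
    rightBr L ∈ LieN d L.length := by
  induction L using rightBr.induct with
  | case1 => exact Submodule.zero_mem _
  | case2 x => exact mem_LieN_one_of_deg1 (hL x List.mem_cons_self)
  | case3 x l hl ih =>
    rw [rightBr_cons x hl, List.length_cons, add_comm]
    exact brT_mem_LieN (mem_LieN_one_of_deg1 (hL x List.mem_cons_self))
      (ih fun y hy => hL y (List.mem_cons_of_mem x hy))

lemma Nop_mulT_comm (f g : Ten d) : Nop (mulT f g) = Nop (mulT g f) := by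
  funext w
  set n := w.length
  have hcut : ∀ k ∈ Finset.range (n + 1),
      ∑ m ∈ Finset.range n, f ((w.rotate m).take k) * g ((w.rotate m).drop k) =
      ∑ m ∈ Finset.range n, g ((w.rotate m).take (n - k)) * f ((w.rotate m).drop (n - k)) := by
    intro k hk
    have hkn : k ≤ n := Nat.lt_succ_iff.1 (Finset.mem_range.1 hk)
    -- cutting `w.rotate m` after `k` letters = cutting `w.rotate (m + k)` after `n - k` letters
    refine Eq.trans ?_
      (sum_range_rotate_add w (fun v => g (v.take (n - k)) * f (v.drop (n - k))) k)
    refine Finset.sum_congr rfl fun m _ => ?_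
    have hlen : (w.rotate m).length = n := List.length_rotate w m
    rw [← List.rotate_rotate, ← hlen, take_rotate_of_le (hlen ▸ hkn),
      drop_rotate_of_le (hlen ▸ hkn), mul_comm]
  simp only [Nop, mulT, List.length_rotate]
  rw [Finset.sum_comm, Finset.sum_congr rfl hcut, ← Finset.sum_range_reflect, Finset.sum_comm]
  refine Finset.sum_congr rfl fun m _ => Finset.sum_congr rfl fun k hk => ?_
  rw [Nat.add_sub_cancel, Nat.sub_sub_self (Nat.lt_succ_iff.1 (Finset.mem_range.1 hk))]

lemma Nop_mulT_brT (a y v : Ten d) : Nop (mulT a (brT y v)) = Nop (mulT (brT a y) v) := by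
  rw [brT, brT, mulT_sub, sub_mulT, Nop_sub, Nop_sub, mulT_assoc, ← mulT_assoc a v y,
    Nop_mulT_comm (mulT a v) y, mulT_assoc]

lemma mulT_apply_nil_of_deg1 {X : Ten d} (hX : deg1 X) (v : Ten d) : mulT X v [] = 0 := by
  simp [mulT, hX []]

lemma mulT_apply_cons_of_deg1 {X : Ten d} (hX : deg1 X) (v : Ten d) (c : Fin d) (w : Word d) :
    mulT X v (c :: w) = X [c] * v w := by
  rw [mulT, Finset.sum_eq_single 1 (fun k hk hk1 => ?_) (by simp)]
  · rfl
  · rw [Finset.mem_range] at hk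
    rw [hX _ (by rw [List.length_take]; omega), zero_mul]

def prodT : List (Ten d) → Ten d
  | [] => oneT
  | x :: A => mulT x (prodT A)

lemma prodT_append (A B : List (Ten d)) : prodT (A ++ B) = mulT (prodT A) (prodT B) := by
  induction A with
  | nil => exact (oneT_mulT _).symm
  | cons x A ih => rw [List.cons_append, prodT, prodT, ih, mulT_assoc]

lemma prodT_concat (A : List (Ten d)) (y : Ten d) : prodT (A ++ [y]) = mulT (prodT A) y := by
  rw [prodT_append, prodT, prodT, mulT_oneT]

lemma prodT_apply {A : List (Ten d)} (hA : ∀ x ∈ A, deg1 x) (w : Word d) :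
    prodT A w = if w.length = A.length then (List.zipWith (fun x c => x [c]) A w).prod else 0 := by
  induction A generalizing w with
  | nil => cases w <;> simp [prodT, oneT]
  | cons x A ih =>
    have hx := hA x List.mem_cons_self
    cases w with
    | nil => simp [prodT, mulT_apply_nil_of_deg1 hx]
    | cons c w =>
      rw [prodT, mulT_apply_cons_of_deg1 hx, ih fun y hy => hA y (List.mem_cons_of_mem x hy)]
      simp

lemma prodT_rotate_apply {A : List (Ten d)} (hA : ∀ x ∈ A, deg1 x) (w : Word d) (k : ℕ) :
    prodT (A.rotate k) (w.rotate k) = prodT A w := by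
  rw [prodT_apply (fun x hx => hA x (List.mem_rotate.1 hx)), prodT_apply hA,
    List.length_rotate, List.length_rotate]
  split_ifs with h
  · rw [← List.zipWith_rotate_distrib _ _ _ _ h.symm]
    exact (List.rotate_perm _ _).prod_eq
  · rfl

lemma Nop_prodT {A : List (Ten d)} (hA : ∀ x ∈ A, deg1 x) :
    Nop (prodT A) = ∑ k ∈ Finset.range A.length, prodT (A.rotate k) := by
  funext w
  rw [Finset.sum_apply, Nop]
  by_cases hw : w.length = A.length
  -- `prodT (A.rotate k) w = prodT A (w.rotate (n - k))`, and `k ↦ n - k` permutes the rotations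
  · rw [← sum_range_rotate_add w _ 1, ← Finset.sum_range_reflect, hw]
    refine Finset.sum_congr rfl fun k hk => ?_
    have hkn := Finset.mem_range.1 hk
    rw [← prodT_rotate_apply hA _ k, List.rotate_rotate,
      show A.length - 1 - k + 1 + k = w.length by omega, List.rotate_length]
  · have hrot : ∀ k, (A.rotate k).length ≠ w.length := fun k => by simpa using Ne.symm hw
    rw [Finset.sum_eq_zero fun m _ => by rw [prodT_apply hA, if_neg (by simpa using hw)],
      Finset.sum_eq_zero fun k _ => by
        rw [prodT_apply (fun x hx => hA x (List.mem_rotate.1 hx)), if_neg (Ne.symm (hrot k))]]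

/-- The part of `Nop (mulT (prodT A) u)` coming from the rotations that start inside `A`. -/
def prefixRotT (A : List (Ten d)) (u : Ten d) : Ten d :=
  ∑ j ∈ Finset.range A.length, mulT (mulT (prodT (A.drop j)) u) (prodT (A.take j))

lemma prefixRotT_concat_sub_cons (A : List (Ten d)) (y u : Ten d) :
    prefixRotT (A ++ [y]) u - prefixRotT (y :: A) u =
      prefixRotT A (brT y u) + mulT y (brT u (prodT A)) := by
  have hconcat : prefixRotT (A ++ [y]) u =
      ∑ j ∈ Finset.range A.length,
          mulT (mulT (prodT (A.drop j)) (mulT y u)) (prodT (A.take j)) +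
        mulT (mulT y u) (prodT A) := by
    rw [prefixRotT, List.length_append, List.length_singleton, Finset.sum_range_succ,
      List.drop_left, List.take_left, prodT, prodT, mulT_oneT]
    congr 1
    refine Finset.sum_congr rfl fun j hj => ?_
    have hjA := (Finset.mem_range.1 hj).le
    rw [List.drop_append_of_le_length hjA, List.take_append_of_le_length hjA, prodT_concat]
    simp only [mulT_assoc]
  have hcons : prefixRotT (y :: A) u =
      ∑ j ∈ Finset.range A.length,
          mulT (mulT (prodT (A.drop j)) u) (mulT y (prodT (A.take j))) +
        mulT (mulT y (prodT A)) u := by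
    rw [prefixRotT, List.length_cons, Finset.sum_range_succ']
    simp only [List.drop_succ_cons, List.take_succ_cons, List.drop_zero, List.take_zero, prodT,
      mulT_oneT]
  rw [hconcat, hcons, prefixRotT, brT, brT]
  simp only [mulT_sub, sub_mulT, Finset.sum_sub_distrib, mulT_assoc]
  abel

def nopCorrection (a : Ten d) (L : List (Ten d)) : Ten d :=
  ∑ i ∈ Finset.range L.length, mulT (L.getD i 0)
    (if i + 1 = L.length then leftBr a (L.take i)
     else brT (rightBr (L.drop (i + 1))) (leftBr a (L.take i)))

lemma nopCorrection_singleton (a y : Ten d) : nopCorrection a [y] = mulT y a := by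
  simp [nopCorrection, leftBr]

lemma nopCorrection_cons (a y : Ten d) {L : List (Ten d)} (hL : L ≠ []) :
    nopCorrection a (y :: L) = mulT y (brT (rightBr L) a) + nopCorrection (brT a y) L := by
  rw [nopCorrection, List.length_cons, Finset.sum_range_succ', add_comm, nopCorrection,
    if_neg (by simpa using hL)]
  simp only [List.getD_cons_succ, List.take_succ_cons, List.drop_succ_cons, leftBr_cons,
    Nat.add_right_cancel_iff]
  rfl

lemma nopCorrection_sub (a b : Ten d) (L : List (Ten d)) :
    nopCorrection (a - b) L = nopCorrection a L - nopCorrection b L := by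
  rw [nopCorrection, nopCorrection, nopCorrection, ← Finset.sum_sub_distrib]
  refine Finset.sum_congr rfl fun i _ => ?_
  split_ifs <;> simp only [leftBr_sub, brT_sub_right, mulT_sub]

theorem Nop_mulT_prodT_rightBr {A L : List (Ten d)} (hA : ∀ x ∈ A, deg1 x)
    (hL : ∀ y ∈ L, deg1 y) :
    Nop (mulT (prodT A) (rightBr L)) = prefixRotT A (rightBr L) + nopCorrection (prodT A) L := by
  induction L generalizing A with
  | nil => simp [rightBr, mulT_zero, zero_mulT, Nop_zero, prefixRotT, nopCorrection]
  | cons y L ih =>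
    have hy := hL y List.mem_cons_self
    have hL' : ∀ z ∈ L, deg1 z := fun z hz => hL z (List.mem_cons_of_mem y hz)
    by_cases hL0 : L = []
    · subst hL0
      have hAy : ∀ x ∈ A ++ [y], deg1 x := by simpa [or_imp, forall_and] using ⟨hA, hy⟩
      rw [rightBr, nopCorrection_singleton, ← prodT_concat, Nop_prodT hAy, List.length_append,
        List.length_singleton, Finset.sum_range_succ, List.rotate_append_length_eq, prefixRotT]
      congr 1
      refine Finset.sum_congr rfl fun k hk => ?_
      have hkA := (Finset.mem_range.1 hk).le
      rw [List.rotate_eq_drop_append_take (by simp; omega), List.drop_append_of_le_length hkA,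
        List.take_append_of_le_length hkA, prodT_append, prodT_concat]
    · have hyA : ∀ x ∈ y :: A, deg1 x := by simpa using ⟨hy, hA⟩
      have hAy : ∀ x ∈ A ++ [y], deg1 x := by simpa [or_imp, forall_and] using ⟨hA, hy⟩
      calc Nop (mulT (prodT A) (rightBr (y :: L)))
          = Nop (mulT (prodT (A ++ [y])) (rightBr L)) -
              Nop (mulT (prodT (y :: A)) (rightBr L)) := by
            rw [rightBr_cons y hL0, Nop_mulT_brT, brT, sub_mulT, Nop_sub, prodT_concat, prodT]
        _ = (prefixRotT (A ++ [y]) (rightBr L) - prefixRotT (y :: A) (rightBr L)) +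
              nopCorrection (prodT (A ++ [y]) - prodT (y :: A)) L := by
            rw [ih hAy hL', ih hyA hL', nopCorrection_sub]
            abel
        _ = prefixRotT A (rightBr (y :: L)) + nopCorrection (prodT A) (y :: L) := by
            rw [prefixRotT_concat_sub_cons, nopCorrection_cons _ _ hL0, rightBr_cons y hL0,
              prodT_concat, prodT, ← brT]
            abel

theorem Nop_mulT_rightBr {X : Ten d} (hX : deg1 X) {L : List (Ten d)} (hL : ∀ y ∈ L, deg1 y) :
    Nop (mulT X (rightBr L)) = mulT X (rightBr L) + nopCorrection X L := by
  simpa [prodT, prefixRotT, mulT_oneT] using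
    Nop_mulT_prodT_rightBr (A := [X]) (by simpa using hX) hL

def HLspan (d : ℕ) : Submodule ℚ (Ten d) :=
  Submodule.span ℚ {g : Ten d | ∃ X v : Ten d, deg1 X ∧ memLhat v ∧ g = mulT X v}

lemma nopCorrection_mem_HLspan {X : Ten d} (hX : deg1 X) {L : List (Ten d)}
    (hL : ∀ y ∈ L, deg1 y) : nopCorrection X L ∈ HLspan d := by
  refine Submodule.sum_mem _ fun i hi => Submodule.subset_span ⟨L.getD i 0, _, ?_, ?_, rfl⟩
  · rw [List.getD_eq_getElem _ _ (Finset.mem_range.1 hi)]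
    exact hL _ (List.getElem_mem _)
  · have hleft := leftBr_mem_LieN (l := L.take i)
      (fun y hy => hL y (List.mem_of_mem_take hy)) (mem_LieN_one_of_deg1 hX)
    split_ifs
    · exact memLhat_of_mem_LieN hleft
    · exact memLhat_of_mem_LieN (brT_mem_LieN
        (rightBr_mem_LieN fun y hy => hL y (List.mem_of_mem_drop hy)) hleft)

lemma Nop_mulT_mem_HLspan {X : Ten d} (hX : deg1 X) {q : ℕ} {u : Ten d} (hu : u ∈ LieN d q) :
    Nop (mulT X u) ∈ HLspan d := by
  refine (Submodule.span_le (p := (HLspan d).comap (Nopₗ ∘ₗ mulTₗ X)) |>.2 ?_) hu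
  rintro _ ⟨w, rfl, rfl⟩
  have hw : ∀ y ∈ w.map singT, deg1 y := by
    intro y hy
    obtain ⟨i, -, rfl⟩ := List.mem_map.1 hy
    exact singT_mem_homogT i
  show Nop (mulT X (PhiWord w)) ∈ HLspan d
  rw [← rightBr_map_singT, Nop_mulT_rightBr hX hw]
  exact Submodule.add_mem _ (Submodule.subset_span
    ⟨X, _, hX, memLhat_of_mem_LieN (rightBr_mem_LieN hw), rfl⟩) (nopCorrection_mem_HLspan hX hw)

lemma truncT_zero_mulT_of_deg1 {X : Ten d} (hX : deg1 X) (v : Ten d) :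
    truncT 0 (mulT X v) = 0 := by
  funext w
  cases w <;> simp [truncT, mulT_apply_nil_of_deg1 hX]

lemma truncT_succ_mulT_of_deg1 {X : Ten d} (hX : deg1 X) (v : Ten d) (p : ℕ) :
    truncT (p + 1) (mulT X v) = mulT X (truncT p v) := by
  funext w
  cases w with
  | nil => simp [truncT, mulT_apply_nil_of_deg1 hX]
  | cons c w => by_cases h : w.length = p <;> simp [truncT, mulT_apply_cons_of_deg1 hX, h]

lemma Nop_truncT_mem_HLspan (p : ℕ) {g : Ten d} (hg : g ∈ HLspan d) :
    Nop (truncT p g) ∈ HLspan d := by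
  refine (Submodule.span_le (p := (HLspan d).comap (Nopₗ ∘ₗ truncTₗ p)) |>.2 ?_) hg
  rintro _ ⟨X, v, hX, hv, rfl⟩
  show Nop (truncT p (mulT X v)) ∈ HLspan d
  cases p with
  | zero => rw [truncT_zero_mulT_of_deg1 hX, Nop_zero]; exact Submodule.zero_mem _
  | succ p => rw [truncT_succ_mulT_of_deg1 hX]; exact Nop_mulT_mem_HLspan hX (hv p)

theorem memHLhat_Nop {f : Ten d} (hf : memHLhat f) : memHLhat (Nop f) := fun p => by
  rw [truncT_Nop, ← truncT_truncT]
  exact Nop_truncT_mem_HLspan p (hf p)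

theorem Nop_H_tensor_bracket_general (d : ℕ) (X : Ten d) (hX : deg1 X)
    (L : List (Ten d)) (hLd : ∀ x ∈ L, deg1 x) :
    (Nop (mulT X (rightBr L)) = mulT X (rightBr L) +
      ∑ i ∈ Finset.range L.length,
        mulT (L.getD i 0)
          (if i + 1 = L.length then leftBr X (L.take i)
           else brT (rightBr (L.drop (i + 1))) (leftBr X (L.take i)))) ∧
    (∀ f : Ten d, memHLhat f → memHLhat (Nop f)) :=
  ⟨Nop_mulT_rightBr hX hLd, fun _ => memHLhat_Nop⟩

/-- For `X, Y₁, …, Y_m ∈ H` and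
`u = [Y₁,[Y₂,[⋯,[Y_{m-1},Y_m]⋯]]]` the cyclic symmetrization satisfies
`N(X⊗u) = X⊗u + ∑_{i=1}^m Y_i ⊗ [[Y_{i+1},⋯[Y_{m-1},Y_m]⋯],[⋯[[X,Y₁],Y₂],⋯,Y_{i-1}]]`
(with the convention that for `i = m` the outer bracket degenerates to its
second entry `[⋯[[X,Y₁],Y₂],⋯,Y_{m-1}]`).  In particular `N` maps `H ⊗ 𝓛̂`
into `H ⊗ 𝓛̂`. -/
theorem Nop_H_tensor_bracket (d : ℕ) (X : Ten d) (hX : deg1 X)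
    (L : List (Ten d)) (hL : L ≠ []) (hLd : ∀ x ∈ L, deg1 x) :
    (Nop (mulT X (rightBr L)) = mulT X (rightBr L) +
      ∑ i ∈ Finset.range L.length,
        mulT (L.getD i 0)
          (if i + 1 = L.length then leftBr X (L.take i)
           else brT (rightBr (L.drop (i + 1))) (leftBr X (L.take i)))) ∧
    (∀ f : Ten d, memHLhat f → memHLhat (Nop f)) :=
  Nop_H_tensor_bracket_general d X hX L hLd

end Paper
end

section
/- Let H be a symplectic Q-vector space of dimension 2g with symplectic basis A₁,B₁,…,A_g,B_g and ω = Σᵢ (AᵢBᵢ − BᵢAᵢ) in H^{⊗2}. Under the identification of derivations of the completed tensor algebra with H⊗T̂ via Poincaré duality, the Lie algebra of derivations killing ω equals the kernel of the bracket map H⊗T̂ → T̂, which equals N(T̂₁). -/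
/-! Model of the completed tensor algebra `T̂` of `H = ℚ^d`: an element of `T̂`
is a function assigning to each word in the basis letters (elements of `Fin d`)
its coefficient. -/

namespace Paper

variable {d : ℕ}

/-- the intersection (symplectic) pairing on the basis of `H = ℚ^{2g}`:
`(A_i · B_i) = 1`, `(B_i · A_i) = -1`, all other pairings `0`, where
`A_i, B_i` are the letters `2i, 2i+1`. -/
def pairC {g : ℕ} (a b : Fin (2 * g)) : ℚ :=
  if a.val % 2 = 0 ∧ b.val = a.val + 1 then 1
  else if b.val % 2 = 0 ∧ a.val = b.val + 1 then -1 else 0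

/-- the symplectic form `ω = ∑ A_i B_i - B_i A_i ∈ H^{⊗2}` -/
def omegaT (g : ℕ) : Ten (2 * g) :=
  fun w => ∑ a : Fin (2 * g), ∑ b : Fin (2 * g),
    pairC a b * (if w = [a, b] then 1 else 0)

/-- the value on the basis letter `b` of the derivation associated to
`f ∈ H ⊗ T̂` via Poincaré duality `X ⊗ u ↦ (Y ↦ (Y·X)u)` -/
def phiD {g : ℕ} (f : Ten (2 * g)) (b : Fin (2 * g)) : Ten (2 * g) :=
  fun m => ∑ c : Fin (2 * g), pairC b c * f (c :: m)

/-- the derivation of `T̂` associated to `f ∈ H ⊗ T̂` via Poincaré duality,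
extended to all of `T̂` by the Leibniz rule. -/
def derOf {g : ℕ} (f t : Ten (2 * g)) : Ten (2 * g) :=
  fun w => ∑ i ∈ Finset.range (w.length + 1), ∑ j ∈ Finset.Icc i w.length,
    ∑ b : Fin (2 * g), t (w.take i ++ b :: w.drop j) * phiD f b ((w.take j).drop i)

/-- the intersection pairing of two elements of `H` -/
def pairT {g : ℕ} (u v : Ten (2 * g)) : ℚ :=
  ∑ a : Fin (2 * g), ∑ b : Fin (2 * g), u [a] * v [b] * pairC a b

/-- the product of a list of elements of `T̂` -/
def prodL : List (Ten d) → Ten d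
  | [] => oneT
  | x :: l => mulT x (prodL l)

/-! The symplectic matrix `J = (a·b)` satisfies `JᵀJ = 1` and `J = -Jᵀ`. Applying the
derivation `D_f` to the quadratic element `ω` by the Leibniz rule therefore leaves two
contractions on a word `w`: at its first letter one gets `-f(w)`, at its last letter
`f(ν w)`. So `D_f(ω) = -[·,·](f)`, and `f` lies in the kernel of the bracket iff it is
invariant under rotation of words; a rotation-invariant `f` without constant term is
`N(f / deg)`, and every `N h` is rotation invariant. -/

section Symplectic

variable {g : ℕ}

def partner (x : Fin (2 * g)) : Fin (2 * g) :=
  ⟨if x.val % 2 = 0 then x.val + 1 else x.val - 1, by have := x.2; split_ifs <;> omega⟩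

def partnerSign (x : Fin (2 * g)) : ℚ := if x.val % 2 = 0 then 1 else -1

lemma pairC_swap (a b : Fin (2 * g)) : pairC b a = -pairC a b := by
  unfold pairC
  split_ifs <;> grind

lemma pairC_eq_ite (a b : Fin (2 * g)) :
    pairC a b = if a = partner b then -partnerSign b else 0 := by
  have := b.2
  simp only [pairC, partner, partnerSign, Fin.ext_iff]
  split_ifs <;> (try norm_num) <;> omega

lemma partner_injective : Function.Injective (partner (g := g)) := by
  intro x y h
  have := x.2; have := y.2
  simp only [partner, Fin.ext_iff] at h ⊢
  split_ifs at h <;> omega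

lemma partnerSign_mul_self (x : Fin (2 * g)) : partnerSign x * partnerSign x = 1 := by
  unfold partnerSign; split_ifs <;> norm_num

lemma sum_pairC_mul_pairC (x y : Fin (2 * g)) :
    ∑ b, pairC b x * pairC b y = if x = y then 1 else 0 := by
  simp only [pairC_eq_ite _ x, ite_mul, zero_mul, Finset.sum_ite_eq', Finset.mem_univ, if_true,
    pairC_eq_ite _ y, partner_injective.eq_iff]
  split_ifs with h
  · subst h; rw [neg_mul_neg, partnerSign_mul_self]
  · rw [mul_zero]

lemma sum_pairC_mul_phiD (f : Ten (2 * g)) (x : Fin (2 * g)) (t : Word (2 * g)) :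
    ∑ b, pairC b x * phiD f b t = f (x :: t) := by
  simp only [phiD, Finset.mul_sum, ← mul_assoc]
  rw [Finset.sum_comm]
  simp only [← Finset.sum_mul, sum_pairC_mul_pairC, ite_mul, one_mul, zero_mul,
    Finset.sum_ite_eq, Finset.mem_univ, if_true]

lemma omegaT_pair (x y : Fin (2 * g)) : omegaT g [x, y] = pairC x y := by
  simp [omegaT, ite_and, Finset.sum_ite_eq]

lemma omegaT_of_length_ne {u : Word (2 * g)} (hu : u.length ≠ 2) : omegaT g u = 0 := by
  refine Finset.sum_eq_zero fun a _ => Finset.sum_eq_zero fun b _ => ?_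
  rw [if_neg (by rintro rfl; exact hu rfl), mul_zero]

lemma derOf_cons_of_degree_two {f t : Ten (2 * g)}
    (ht : ∀ u : Word (2 * g), u.length ≠ 2 → t u = 0) (a : Fin (2 * g)) (l : Word (2 * g)) :
    derOf f t (a :: l) = ∑ b, t [a, b] * phiD f b l
      + ∑ b, t (b :: (a :: l).drop l.length) * phiD f b ((a :: l).take l.length) := by
  unfold derOf
  rw [Finset.sum_sigma', Finset.sum_eq_add_of_mem ⟨1, l.length + 1⟩ ⟨0, l.length⟩
    (by simp) (by simp) (by simp)]
  · simp
  · rintro ⟨i, j⟩ hij hne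
    simp only [Finset.mem_sigma, Finset.mem_range, Finset.mem_Icc, List.length_cons] at hij
    refine Finset.sum_eq_zero fun b _ => ?_
    rw [ht, zero_mul]
    simp only [List.length_append, List.length_take, List.length_cons, List.length_drop]
    grind

lemma sum_omegaT_cons_mul_phiD (f : Ten (2 * g)) (a : Fin (2 * g)) (t : Word (2 * g)) :
    ∑ b, omegaT g [a, b] * phiD f b t = -f (a :: t) := by
  simp only [omegaT_pair, pairC_swap _ a, neg_mul, Finset.sum_neg_distrib, sum_pairC_mul_phiD]

lemma derOf_omegaT (f : Ten (2 * g)) : derOf f (omegaT g) = -brMap f := by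
  funext w
  rcases w with _ | ⟨a, l⟩
  · simp [derOf, brMap, omegaT_of_length_ne]
  obtain ⟨x, hx⟩ : ∃ x, (a :: l).drop l.length = [x] :=
    List.length_eq_one_iff.mp (by simp)
  have hrot : (a :: l).rotate l.length = x :: (a :: l).take l.length := by
    rw [List.rotate_eq_drop_append_take (by simp), hx, List.singleton_append]
  rw [derOf_cons_of_degree_two (fun _ => omegaT_of_length_ne), sum_omegaT_cons_mul_phiD, hx]
  simp only [omegaT_pair, sum_pairC_mul_phiD, Pi.neg_apply, brMap, List.length_cons,
    Nat.add_sub_cancel, hrot]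
  ring

end Symplectic

theorem _root_.List.invariant_rotate_of_rotate_one {β γ : Type*} {F : List β → γ}
    (h : ∀ v, F (v.rotate 1) = F v) (m : ℕ) (v : List β) : F (v.rotate m) = F v := by
  induction m with
  | zero => rw [List.rotate_zero]
  | succ k ih => rw [← List.rotate_rotate, h, ih]

lemma brMap_eq_zero_iff {f : Ten d} : brMap f = 0 ↔ ∀ m v, f (v.rotate m) = f v := by
  refine ⟨fun hf => List.invariant_rotate_of_rotate_one fun v => ?_,
    fun hf => funext fun w => sub_eq_zero.mpr (hf _ w).symm⟩
  have h := congrFun hf (v.rotate 1)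
  rw [brMap, List.rotate_rotate, List.length_rotate, Pi.zero_apply, sub_eq_zero] at h
  rcases v with _ | ⟨a, l⟩
  · rfl
  · simpa [Nat.add_comm 1] using h

lemma Nop_rotate (h : Ten d) (m : ℕ) (v : Word d) : Nop h (v.rotate m) = Nop h v := by
  refine List.invariant_rotate_of_rotate_one (fun v => ?_) m v
  simp only [Nop, List.length_rotate, List.rotate_rotate, Nat.add_comm 1]
  cases hn : v.length with
  | zero => rfl
  | succ n => rw [Finset.sum_range_succ, Finset.sum_range_succ', ← hn, List.rotate_length,
      List.rotate_zero]

lemma Nop_div_length {f : Ten d} (hrot : ∀ m v, f (v.rotate m) = f v) (hnil : f [] = 0) :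
    Nop (fun w => f w / w.length) = f := by
  funext w
  rcases w with _ | ⟨a, l⟩
  · simp [Nop, hnil]
  · simp only [Nop, List.length_rotate, hrot, Finset.sum_const, Finset.card_range, nsmul_eq_mul]
    field_simp

/-- For a symplectic vector space `H` of dimension `2g` with
symplectic form `ω = ∑ A_i B_i - B_i A_i`, under the identification of
derivations of `T̂` with `H ⊗ T̂` via Poincaré duality, the Lie algebra of
derivations killing `ω` equals the kernel of the bracket map `H ⊗ T̂ → T̂`,
which equals `N(T̂₁)`. -/
theorem symplectic_derivations_eq_Nop_image (g : ℕ) (f : Ten (2 * g))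
    (hf : f [] = 0) :
    (derOf f (omegaT g) = 0 ↔ brMap f = 0) ∧
    (brMap f = 0 ↔ ∃ h : Ten (2 * g), h [] = 0 ∧ Nop h = f) := by
  refine ⟨by rw [derOf_omegaT, neg_eq_zero], fun hb => ?_, ?_⟩
  · exact ⟨fun w => f w / w.length, by simp, Nop_div_length (brMap_eq_zero_iff.mp hb) hf⟩
  · rintro ⟨h, -, rfl⟩
    exact brMap_eq_zero_iff.mpr (Nop_rotate h)

end Paper
end

section
/- Let N̂ be defined on the completed tensor algebra by N̂|_{H^{⊗n}} = (1/n)N|_{H^{⊗n}} for n ≥ 1 and 0 in degree 0, and let Φ be the iterated-bracket map. Then N̂(χ(u⊗v)) = N̂(uΦ(v)) for all u in T̂ and v in T̂₁, where χ: T̂ ⊗_{T̂} T̂₁ → T̂₁ includes the relative tensor product via the conjugation action. -/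
/-! Model of the completed tensor algebra `T̂` of `H = ℚ^d`: an element of `T̂`
is a function assigning to each word in the basis letters (elements of `Fin d`)
its coefficient. -/

namespace Paper

variable {d : ℕ}

/-- the iterated-bracket (Dynkin) map `Φ : T̂ → 𝓛̂`,
`Φ(X₁⋯X_n) = [X₁,[⋯[X_{n-1},X_n]⋯]]`, computed in coefficients. -/
def Dyn (f : Ten d) : Ten d :=
  fun w => ∑ u ∈ w.permutations.toFinset, f u * PhiWord u w
/-- the iterated left-normed bracket `[[⋯[u,c₁],⋯],c_k]` of `u` with the
letters of a word; this computes the right action of (the antipode of) a word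
on `u ∈ T̂^c` in the conjugation module. -/
def adR : Word d → Ten d → Ten d
  | [], u => u
  | c :: m, u => adR m (brT u (singT c))

/-- the map `χ : T̂^c ⊗_{T̂} T̂₁ → T̂₁` of Lemma 6.3.1, precomposed with
`u ⊗ -`: using that `T̂₁` is a free left `T̂`-module on the last letter, the
class of `u ⊗ v` is `∑ (adR m u) ⊗ X` over the decompositions `v = ∑ m·X`
(word `m` followed by a last letter `X`), included back into `T̂₁`. -/
def chi (u v : Ten d) : Ten d :=
  fun w => ∑ k ∈ Finset.range w.length, ∑ mf : Fin k → Fin d, ∑ x : Fin d,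
    v (List.ofFn mf ++ [x]) * mulT (adR (List.ofFn mf) u) (singT x) w

/-- the normalized cyclic symmetrization `N̂`, equal to `N/n` in degree `n ≥ 1`
and `0` in degree `0`. -/
def Nhat (f : Ten d) : Ten d :=
  fun w => if w.length = 0 then 0 else ((w.length : ℚ))⁻¹ * Nop f w

/-! ### Auxiliary lemmas -/

lemma mulT_sub_left (f f' g : Ten d) : mulT (f - f') g = mulT f g - mulT f' g := by
  funext w
  simp [mulT, sub_mul, Finset.sum_sub_distrib]

lemma mulT_sub_right (f g g' : Ten d) : mulT f (g - g') = mulT f g - mulT f g' := by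
  funext w
  simp [mulT, mul_sub, Finset.sum_sub_distrib]

lemma Nhat_sub (f g : Ten d) : Nhat (f - g) = Nhat f - Nhat g := by
  funext w
  by_cases h : w.length = 0 <;>
    simp [Nhat, Nop, h, Finset.sum_sub_distrib, mul_sub]

lemma Nhat_trace (a b : Ten d) : Nhat (mulT a b) = Nhat (mulT b a) := by
  funext w
  by_cases h : w.length = 0
  · simp [Nhat, h]
  have hn : 0 < w.length := Nat.pos_of_ne_zero h
  simp only [Nhat, h, if_false]
  congr 1
  unfold Nop mulT
  simp only [List.length_rotate]
  rw [Finset.sum_sigma', Finset.sum_sigma']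
  refine Finset.sum_bij'
    (fun a _ => (⟨(a.1 + a.2) % w.length, w.length - a.2⟩ : (_ : ℕ) × ℕ))
    (fun b _ => ⟨(b.1 + b.2) % w.length, w.length - b.2⟩) ?_ ?_ ?_ ?_ ?_
  · rintro ⟨m, k⟩ ha
    simp only [Finset.mem_sigma, Finset.mem_range] at ha ⊢
    exact ⟨Nat.mod_lt _ hn, by omega⟩
  · rintro ⟨m, k⟩ ha
    simp only [Finset.mem_sigma, Finset.mem_range] at ha ⊢
    exact ⟨Nat.mod_lt _ hn, by omega⟩
  · rintro ⟨m, k⟩ ha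
    simp only [Finset.mem_sigma, Finset.mem_range] at ha
    obtain ⟨hm, hk⟩ := ha
    simp only [Sigma.mk.inj_iff]
    have h1 : w.length - (w.length - k) = k := by omega
    refine ⟨?_, heq_of_eq h1⟩
    rw [Nat.mod_add_mod]
    have h2 : m + k + (w.length - k) = m + w.length := by omega
    rw [h2, Nat.add_mod_right, Nat.mod_eq_of_lt hm]
  · rintro ⟨m, k⟩ ha
    simp only [Finset.mem_sigma, Finset.mem_range] at ha
    obtain ⟨hm, hk⟩ := ha
    simp only [Sigma.mk.inj_iff]
    have h1 : w.length - (w.length - k) = k := by omega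
    refine ⟨?_, heq_of_eq h1⟩
    rw [Nat.mod_add_mod]
    have h2 : m + k + (w.length - k) = m + w.length := by omega
    rw [h2, Nat.add_mod_right, Nat.mod_eq_of_lt hm]
  · rintro ⟨m, k⟩ ha
    simp only [Finset.mem_sigma, Finset.mem_range] at ha
    obtain ⟨hm, hk⟩ := ha
    have hk' : k ≤ w.length := by omega
    have hrot : w.rotate ((m + k) % w.length) = (w.rotate m).rotate k := by
      rw [List.rotate_mod, List.rotate_rotate]
    have hkl : k ≤ (w.rotate m).length := by rw [List.length_rotate]; exact hk'
    have hsplit : (w.rotate m).rotate k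
        = (w.rotate m).drop k ++ (w.rotate m).take k :=
      List.rotate_eq_drop_append_take hkl
    have hdl : ((w.rotate m).drop k).length = w.length - k := by
      rw [List.length_drop, List.length_rotate]
    rw [hrot, hsplit, List.take_left' hdl, List.drop_left' hdl, mul_comm]

lemma Nhat_br_shift (a b g : Ten d) :
    Nhat (mulT (brT a b) g) = Nhat (mulT a (brT b g)) := by
  unfold brT
  rw [mulT_sub_left, mulT_sub_right, Nhat_sub, Nhat_sub, mulT_assoc]
  congr 1
  rw [Nhat_trace (mulT b a) g, ← mulT_assoc, Nhat_trace]

lemma phiWord_cons (x : Fin d) {l : Word d} (hl : l ≠ []) :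
    PhiWord (x :: l) = brT (singT x) (PhiWord l) := by
  cases l with
  | nil => exact absurd rfl hl
  | cons y m => rfl

lemma phi_supp (s : Word d) : ∀ t : Word d, ¬ s.Perm t → PhiWord s t = 0 := by
  induction s with
  | nil => intro t ht; rfl
  | cons x l ih =>
    intro t ht
    cases l with
    | nil =>
      by_cases h : t = [x]
      · exact absurd (by simp [h]) ht
      · simp only [PhiWord, singT]
        exact if_neg h
    | cons y m =>
      rw [phiWord_cons x (by simp)]
      show mulT (singT x) (PhiWord (y :: m)) t - mulT (PhiWord (y :: m)) (singT x) t = 0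
      have h1 : mulT (singT x) (PhiWord (y :: m)) t = 0 := by
        apply Finset.sum_eq_zero
        intro k hk
        by_cases hx : t.take k = [x]
        · have hphi : PhiWord (y :: m) (t.drop k) = 0 := by
            apply ih
            intro hp
            apply ht
            have : t = x :: t.drop k := by
              conv_lhs => rw [← List.take_append_drop k t]
              rw [hx]; rfl
            rw [this]
            exact hp.cons x
          rw [hphi, mul_zero]
        · simp [singT, hx]
      have h2 : mulT (PhiWord (y :: m)) (singT x) t = 0 := by
        apply Finset.sum_eq_zero
        intro k hk
        by_cases hx : t.drop k = [x]
        · have hphi : PhiWord (y :: m) (t.take k) = 0 := by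
            apply ih
            intro hp
            apply ht
            have : t = t.take k ++ [x] := by
              conv_lhs => rw [← List.take_append_drop k t]
              rw [hx]
            rw [this]
            exact (hp.cons x).trans (List.perm_append_singleton x _).symm
          rw [hphi, zero_mul]
        · simp [singT, hx]
      rw [h1, h2, sub_zero]

lemma star_lemma (m : Word d) : ∀ (u : Ten d) (x : Fin d),
    Nhat (mulT (adR m u) (singT x)) = Nhat (mulT u (PhiWord (m ++ [x]))) := by
  induction m with
  | nil => intro u x; rfl
  | cons c m ih =>
    intro u x
    show Nhat (mulT (adR m (brT u (singT c))) (singT x)) = _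
    rw [ih, Nhat_br_shift, ← phiWord_cons c (by simp)]
    rfl

def snocEquiv (q d : ℕ) : (Fin q → Fin d) × Fin d ≃ (Fin (q + 1) → Fin d) where
  toFun p := Fin.snoc p.1 p.2
  invFun f := (fun i => f i.castSucc, f (Fin.last q))
  left_inv := by rintro ⟨mf, x⟩; simp
  right_inv f := by
    funext i
    induction i using Fin.lastCases <;> simp

lemma sum_snoc (q : ℕ) (g : Word d → ℚ) :
    (∑ mf : Fin q → Fin d, ∑ x : Fin d, g (List.ofFn mf ++ [x]))
      = ∑ f : Fin (q + 1) → Fin d, g (List.ofFn f) := by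
  calc (∑ mf : Fin q → Fin d, ∑ x : Fin d, g (List.ofFn mf ++ [x]))
      = ∑ p : (Fin q → Fin d) × Fin d, g (List.ofFn p.1 ++ [p.2]) :=
        (Fintype.sum_prod_type
          (fun p : (Fin q → Fin d) × Fin d => g (List.ofFn p.1 ++ [p.2]))).symm
    _ = ∑ f : Fin (q + 1) → Fin d, g (List.ofFn f) := by
        refine Fintype.sum_equiv (snocEquiv q d) _ _ (fun p => ?_)
        show g (List.ofFn p.1 ++ [p.2]) = g (List.ofFn (Fin.snoc p.1 p.2))
        rw [List.ofFn_succ']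
        simp [Fin.snoc_castSucc, Fin.snoc_last, List.concat_eq_append]

lemma exists_ofFn (s : Word d) (p : ℕ) (h : s.length = p) :
    ∃ f : Fin p → Fin d, List.ofFn f = s := by
  subst h
  exact ⟨s.get, List.ofFn_get s⟩

set_option maxHeartbeats 1000000 in
lemma dyn_expand (v : Ten d) (n : ℕ) (t : Word d) (ht : t.length ≤ n) :
    Dyn v t = ∑ k ∈ Finset.range n, ∑ mf : Fin k → Fin d, ∑ x : Fin d,
      v (List.ofFn mf ++ [x]) * PhiWord (List.ofFn mf ++ [x]) t := by
  have hR : ∀ k ∈ Finset.range n, (∑ mf : Fin k → Fin d, ∑ x : Fin d,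
      v (List.ofFn mf ++ [x]) * PhiWord (List.ofFn mf ++ [x]) t)
      = ∑ f : Fin (k + 1) → Fin d, v (List.ofFn f) * PhiWord (List.ofFn f) t :=
    fun k _ => sum_snoc k (fun s => v s * PhiWord s t)
  rw [Finset.sum_congr rfl hR]
  rcases eq_or_ne t [] with rfl | htne
  · have h0 : Dyn v [] = 0 := by
      simp [Dyn, List.permutations_nil, PhiWord]
    rw [h0]
    symm
    apply Finset.sum_eq_zero; intro k _
    apply Finset.sum_eq_zero; intro f _
    rw [phi_supp _ _ (fun hp => by simpa using hp.length_eq), mul_zero]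
  · obtain ⟨q, hq⟩ : ∃ q, t.length = q + 1 := by
      cases t with
      | nil => exact absurd rfl htne
      | cons a l => exact ⟨l.length, rfl⟩
    rw [Finset.sum_eq_single_of_mem q (Finset.mem_range.mpr (by omega)) ?_]
    · unfold Dyn
      rw [show (∑ f : Fin (q + 1) → Fin d, v (List.ofFn f) * PhiWord (List.ofFn f) t)
          = ∑ s ∈ Finset.image List.ofFn Finset.univ, v s * PhiWord s t from
          (Finset.sum_image (f := fun s => v s * PhiWord s t) (g := List.ofFn)
            (s := Finset.univ)
            (fun a _ b _ hab => List.ofFn_injective hab)).symm]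
      apply Finset.sum_subset
      · intro s hs
        rw [List.mem_toFinset, List.mem_permutations] at hs
        obtain ⟨f, hf⟩ := exists_ofFn s (q + 1) (by rw [hs.length_eq, hq])
        exact Finset.mem_image.mpr ⟨f, Finset.mem_univ _, hf⟩
      · intro s _ hs
        rw [List.mem_toFinset, List.mem_permutations] at hs
        rw [phi_supp _ _ hs, mul_zero]
    · intro k _ hk
      apply Finset.sum_eq_zero; intro f _
      rw [phi_supp _ _ (fun hp => hk (by
        have := hp.length_eq
        simp only [List.length_ofFn, hq] at this
        omega)), mul_zero]

lemma mul_dyn_expand (u v : Ten d) (n : ℕ) (w' : Word d) (hw : w'.length ≤ n) :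
    mulT u (Dyn v) w' = ∑ k ∈ Finset.range n, ∑ mf : Fin k → Fin d, ∑ x : Fin d,
      v (List.ofFn mf ++ [x]) * mulT u (PhiWord (List.ofFn mf ++ [x])) w' := by
  unfold mulT
  have key : ∀ j ∈ Finset.range (w'.length + 1),
      u (w'.take j) * Dyn v (w'.drop j)
        = ∑ k ∈ Finset.range n, ∑ mf : Fin k → Fin d, ∑ x : Fin d,
            v (List.ofFn mf ++ [x]) *
              (u (w'.take j) * PhiWord (List.ofFn mf ++ [x]) (w'.drop j)) := by
    intro j _
    rw [dyn_expand v n (w'.drop j) (by rw [List.length_drop]; omega)]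
    rw [Finset.mul_sum]; refine Finset.sum_congr rfl fun k _ => ?_
    rw [Finset.mul_sum]; refine Finset.sum_congr rfl fun mf _ => ?_
    rw [Finset.mul_sum]; refine Finset.sum_congr rfl fun x _ => ?_
    ring
  rw [Finset.sum_congr rfl key, Finset.sum_comm]
  refine Finset.sum_congr rfl fun k _ => ?_
  rw [Finset.sum_comm]
  refine Finset.sum_congr rfl fun mf _ => ?_
  rw [Finset.sum_comm]
  refine Finset.sum_congr rfl fun x _ => ?_
  rw [Finset.mul_sum]

lemma Nhat_congr (f g : Ten d) (w : Word d)
    (h : ∀ w' : Word d, w'.length = w.length → f w' = g w') :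
    Nhat f w = Nhat g w := by
  unfold Nhat Nop
  have : ∀ m ∈ Finset.range w.length, f (w.rotate m) = g (w.rotate m) :=
    fun m _ => h _ (List.length_rotate w m)
  rw [Finset.sum_congr rfl this]

lemma Nhat_triple (n : ℕ) (c : (k : ℕ) → (Fin k → Fin d) → Fin d → ℚ)
    (G : (k : ℕ) → (Fin k → Fin d) → Fin d → Ten d) (w : Word d) :
    Nhat (fun w' => ∑ k ∈ Finset.range n, ∑ mf : Fin k → Fin d, ∑ x : Fin d,
        c k mf x * G k mf x w') w
      = ∑ k ∈ Finset.range n, ∑ mf : Fin k → Fin d, ∑ x : Fin d,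
        c k mf x * Nhat (G k mf x) w := by
  by_cases h : w.length = 0
  · simp [Nhat, h]
  simp only [Nhat, Nop, h, if_false, Finset.mul_sum]
  rw [Finset.sum_comm]
  refine Finset.sum_congr rfl fun k _ => ?_
  rw [Finset.sum_comm]
  refine Finset.sum_congr rfl fun mf _ => ?_
  rw [Finset.sum_comm]
  refine Finset.sum_congr rfl fun x _ => ?_
  refine Finset.sum_congr rfl fun m _ => ?_
  ring

/-- With `N̂ = N/n` in degree `n` and `Φ` the iterated-bracket
map, one has `N̂(χ(u ⊗ v)) = N̂(u Φ(v))` for all `u ∈ T̂` and `v ∈ T̂₁`, where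
`χ : T̂^c ⊗_{T̂} T̂₁ → T̂₁` includes the relative tensor product (taken with
respect to the conjugation action on `T̂^c`) into `T̂₁`. -/
theorem Nhat_chi_eq_Nhat_mul_Dyn (d : ℕ) (u v : Ten d) (hv : v [] = 0) :
    Nhat (chi u v) = Nhat (mulT u (Dyn v)) := by
  funext w
  have lhs : Nhat (chi u v) w
      = Nhat (fun w' => ∑ k ∈ Finset.range w.length, ∑ mf : Fin k → Fin d, ∑ x : Fin d,
          v (List.ofFn mf ++ [x]) * mulT (adR (List.ofFn mf) u) (singT x) w') w :=
    Nhat_congr _ _ w (fun w' hw' => by unfold chi; rw [hw'])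
  have rhs : Nhat (mulT u (Dyn v)) w
      = Nhat (fun w' => ∑ k ∈ Finset.range w.length, ∑ mf : Fin k → Fin d, ∑ x : Fin d,
          v (List.ofFn mf ++ [x]) * mulT u (PhiWord (List.ofFn mf ++ [x])) w') w :=
    Nhat_congr _ _ w (fun w' hw' => mul_dyn_expand u v w.length w' (le_of_eq hw'))
  have lhs' := lhs.trans (Nhat_triple w.length
    (fun k mf x => v (List.ofFn mf ++ [x]))
    (fun k mf x => mulT (adR (List.ofFn mf) u) (singT x)) w)
  have rhs' := rhs.trans (Nhat_triple w.length
    (fun k mf x => v (List.ofFn mf ++ [x]))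
    (fun k mf x => mulT u (PhiWord (List.ofFn mf ++ [x]))) w)
  rw [lhs', rhs']
  refine Finset.sum_congr rfl fun k _ => ?_
  refine Finset.sum_congr rfl fun mf _ => ?_
  refine Finset.sum_congr rfl fun x _ => ?_
  rw [star_lemma (List.ofFn mf) u x]


end Paper
end
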